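/- Let g be analytic near 0 with g(0)=0, g'(0)=1, g''(0)=0, g'''(0) < 0 and let G(x)=∫₀ˣ g(t)dt. If g(x)² - 2G(x)g'(x) + (g⁗(0)/5) g(x)³ G(x) > 0 for all x ≠ 0 in a punctured neighborhood of 0 with x g(x) > 0, then x·d/dx(g(x)/x) < 0 on that punctured neighborhood (for x sufficiently small). -/

import Mathlib

/-!
Put `A = g'''(0)/6 < 0`. Then `g x = x + A x³ + O(x⁴)`, and integrating,
`G x = x²/2 + A x⁴/4 + O(x⁵)`; in particular `G > 0` near `0`. Multiplied by `x²`, the margin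
`2 g G / x - g² - (g⁗(0)/5) g³ G` is `-(A/2) x⁶ + O(x⁷)`, hence positive for small `x ≠ 0`.
The hypothesis says `2 G g' < g² + (g⁗(0)/5) g³ G`, so `2 G g' < 2 G g / x`, i.e. `g' < g / x`,
and `x (g/x)' = g' - g/x`.
-/

open Filter Asymptotics Topology Finset Nat MeasureTheory Interval

theorem HasFPowerSeriesOnBall.factorial_smul_coeff {𝕜 F : Type*} [NontriviallyNormedField 𝕜]
    [NormedAddCommGroup F] [NormedSpace 𝕜 F] [CompleteSpace F] {f : 𝕜 → F}
    {p : FormalMultilinearSeries 𝕜 𝕜 F} {x : 𝕜} {r : ENNReal}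
    (h : HasFPowerSeriesOnBall f p x r) (n : ℕ) : n ! • p.coeff n = iteratedDeriv n f x := by
  simpa [iteratedDeriv_eq_iteratedFDeriv] using h.factorial_smul 1 n

theorem AnalyticAt.isBigO_sub_sum_iteratedDeriv {𝕜 F : Type*} [NontriviallyNormedField 𝕜]
    [CharZero 𝕜] [NormedAddCommGroup F] [NormedSpace 𝕜 F] [CompleteSpace F] {f : 𝕜 → F}
    {x : 𝕜} (hf : AnalyticAt 𝕜 f x) (n : ℕ) :
    (fun y => f (x + y) - ∑ k ∈ range n, ((k ! : 𝕜)⁻¹ * y ^ k) • iteratedDeriv k f x)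
      =O[𝓝 0] (· ^ n) := by
  obtain ⟨p, r, hp⟩ := hf
  have hcoeff (k : ℕ) : ((k ! : 𝕜)⁻¹ * 1) • iteratedDeriv k f x = p.coeff k := by
    rw [← hp.factorial_smul_coeff, mul_one, Nat.cast_smul_eq_nsmul 𝕜 .. |>.symm, smul_smul,
      inv_mul_cancel₀ (by exact_mod_cast k.factorial_ne_zero), one_smul]
  refine IsBigO.congr_left (f₁ := fun y => f (x + y) - p.partialSum n y) ?_ fun y => ?_
  · refine isBigO_norm_right.1 ?_
    simpa [norm_pow] using hp.hasFPowerSeriesAt.isBigO_sub_partialSum_pow n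
  · simp only [FormalMultilinearSeries.partialSum, FormalMultilinearSeries.apply_eq_pow_smul_coeff]
    congr 1
    refine sum_congr rfl fun k _ => ?_
    rw [← hcoeff, smul_smul, mul_one, mul_comm]

theorem AnalyticAt.isBigO_sub_cubic {g : ℝ → ℝ} (hg : AnalyticAt ℝ g 0) (h0 : g 0 = 0)
    (h1 : deriv g 0 = 1) (h2 : iteratedDeriv 2 g 0 = 0) :
    (fun x => g x - (x + iteratedDeriv 3 g 0 / 6 * x ^ 3)) =O[𝓝 0] (· ^ 4) := by
  refine (hg.isBigO_sub_sum_iteratedDeriv 4).congr_left fun x => ?_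
  simp [sum_range_succ, h0, h1, h2, Nat.factorial]
  ring

namespace Asymptotics

variable {𝕜 : Type*} [NormedField 𝕜] {f g : 𝕜 → 𝕜} {m n : ℕ}

theorem isBigO_pow_pow_of_le (h : m ≤ n) : (fun x : 𝕜 => x ^ n) =O[𝓝 0] (· ^ m) :=
  h.eq_or_lt.elim (fun h => h ▸ isBigO_refl _ _) fun h => (isLittleO_pow_pow h).isBigO

theorem isBigO_const_mul_pow (a : 𝕜) (n : ℕ) (h : m ≤ n) :
    (fun x : 𝕜 => a * x ^ n) =O[𝓝 0] (· ^ m) :=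
  (isBigO_pow_pow_of_le h).const_mul_left a

theorem IsBigO.mul_pow (hf : f =O[𝓝 0] (· ^ m)) (hg : g =O[𝓝 0] (· ^ n)) :
    (fun x => f x * g x) =O[𝓝 0] (· ^ (m + n)) :=
  (hf.mul hg).congr_right fun x => (pow_add x m n).symm

end Asymptotics

theorem isBigO_intervalIntegral_pow {E : Type*} [NormedAddCommGroup E] [NormedSpace ℝ E]
    {f : ℝ → E} {n : ℕ} (hf : f =O[𝓝 0] (· ^ n)) :
    (fun x => ∫ t in (0 : ℝ)..x, f t) =O[𝓝 0] (· ^ (n + 1)) := by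
  obtain ⟨C, hC, hfC⟩ := hf.exists_pos
  obtain ⟨δ, hδ, hbound⟩ := Metric.eventually_nhds_iff.1 hfC.bound
  refine IsBigO.of_bound C ?_
  filter_upwards [Metric.ball_mem_nhds 0 hδ] with x hx
  have hle : ∀ t ∈ Ι (0 : ℝ) x, ‖f t‖ ≤ C * |x| ^ n := fun t ht => by
    have htx : |t| ≤ |x| := by
      simpa using Set.abs_sub_left_of_mem_uIcc (Set.uIoc_subset_uIcc ht)
    calc ‖f t‖ ≤ C * |t| ^ n := by
          simpa using hbound (lt_of_le_of_lt (by simpa using htx) hx)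
      _ ≤ C * |x| ^ n := by gcongr
  calc ‖∫ t in (0 : ℝ)..x, f t‖ ≤ C * |x| ^ n * |x - 0| :=
        intervalIntegral.norm_integral_le_of_norm_le_const hle
    _ = C * ‖x ^ (n + 1)‖ := by rw [sub_zero, norm_pow, Real.norm_eq_abs, pow_succ, mul_assoc]

theorem eventually_intervalIntegrable_of_continuousAt {E : Type*} [NormedAddCommGroup E]
    {f : ℝ → E} {a : ℝ} (hf : ∀ᶠ t in 𝓝 a, ContinuousAt f t) :
    ∀ᶠ x in 𝓝 a, IntervalIntegrable f volume a x := by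
  obtain ⟨δ, hδ, hcont⟩ := Metric.eventually_nhds_iff.1 hf
  filter_upwards [Metric.ball_mem_nhds a hδ] with x hx
  refine ContinuousOn.intervalIntegrable fun t ht => (hcont ?_).continuousWithinAt
  exact lt_of_le_of_lt (Set.abs_sub_left_of_mem_uIcc ht) hx

theorem isBigO_intervalIntegral_sub_quartic {g : ℝ → ℝ} {A : ℝ}
    (hint : ∀ᶠ x in 𝓝 0, IntervalIntegrable g volume 0 x)
    (hg : (fun x => g x - (x + A * x ^ 3)) =O[𝓝 0] (· ^ 4)) :
    (fun x => (∫ t in (0 : ℝ)..x, g t) - (x ^ 2 / 2 + A * x ^ 4 / 4)) =O[𝓝 0] (· ^ 5) := by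
  refine (isBigO_intervalIntegral_pow hg).congr' ?_ EventuallyEq.rfl
  filter_upwards [hint] with x hx
  have hpoly (u : ℝ → ℝ) (hu : Continuous u) : IntervalIntegrable u volume 0 x :=
    hu.intervalIntegrable 0 x
  rw [intervalIntegral.integral_sub hx (hpoly _ (by fun_prop)),
    intervalIntegral.integral_add (hpoly _ (by fun_prop)) (hpoly _ (by fun_prop)),
    intervalIntegral.integral_const_mul, integral_id, integral_pow]
  ring

/-- `x²` times `2 g G / x - (g² + (c/5) g³ G)`, the gap between the two sides compared in the
paper, cleared of the division by `x`. -/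
noncomputable def margin (c : ℝ) (g G : ℝ → ℝ) (x : ℝ) : ℝ :=
  x * g x * (2 * G x - x * g x) - c / 5 * x ^ 2 * g x ^ 3 * G x

theorem isBigO_margin_sub {g G : ℝ → ℝ} {A : ℝ} (c : ℝ)
    (hg : (fun x => g x - (x + A * x ^ 3)) =O[𝓝 0] (· ^ 4))
    (hG : (fun x => G x - (x ^ 2 / 2 + A * x ^ 4 / 4)) =O[𝓝 0] (· ^ 5)) :
    (fun x => margin c g G x - -A / 2 * x ^ 6) =O[𝓝 0] (· ^ 7) := by
  have hx : (fun x : ℝ => x) =O[𝓝 0] (· ^ 1) :=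
    (isBigO_const_mul_pow 1 1 le_rfl).congr_left (by simp)
  have hg1 : g =O[𝓝 0] (· ^ 1) :=
    ((hg.trans (isBigO_pow_pow_of_le (by norm_num))).add
      (hx.add (isBigO_const_mul_pow A 3 (by norm_num)))).congr_left fun x => by ring
  have hG2 : G =O[𝓝 0] (· ^ 2) :=
    ((hG.trans (isBigO_pow_pow_of_le (by norm_num))).add
      ((isBigO_const_mul_pow (1 / 2) 2 le_rfl).add
        (isBigO_const_mul_pow (A / 4) 4 (by norm_num)))).congr_left fun x => by ring
  have hxe : (fun x => x * (g x - (x + A * x ^ 3))) =O[𝓝 0] (· ^ 5) := hx.mul_pow hg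
  have h₁ : (fun x => x * g x * (2 * (G x - (x ^ 2 / 2 + A * x ^ 4 / 4))
      - x * (g x - (x + A * x ^ 3)))) =O[𝓝 0] (· ^ 7) :=
    (hx.mul_pow hg1).mul_pow ((hG.const_mul_left 2).sub hxe)
  have hxg : (fun x => A * x ^ 4 + x * (g x - (x + A * x ^ 3))) =O[𝓝 0] (· ^ 3) :=
    (isBigO_const_mul_pow A 4 (by norm_num)).add (hxe.trans (isBigO_pow_pow_of_le (by norm_num)))
  have h₂ : (fun x => A / 2 * x ^ 4 * (A * x ^ 4 + x * (g x - (x + A * x ^ 3))))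
      =O[𝓝 0] (· ^ 7) :=
    (isBigO_const_mul_pow (A / 2) 4 le_rfl).mul_pow hxg
  have hg3 : (fun x => g x ^ 3) =O[𝓝 0] (· ^ 3) := (hg1.pow 3).congr_right fun x => by ring
  have h₃ : (fun x => c / 5 * (x ^ 2 * (g x ^ 3 * G x))) =O[𝓝 0] (· ^ 7) :=
    ((isBigO_refl (· ^ 2) _).mul_pow (hg3.mul_pow hG2)).const_mul_left _
  exact ((h₁.sub h₂).sub h₃).congr_left fun x => by simp only [margin]; ring

theorem eventually_pos_of_isLittleO_sub_pow {f : ℝ → ℝ} {a : ℝ} {n : ℕ} (ha : 0 < a)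
    (hn : Even n) (h : (fun x => f x - a * x ^ n) =o[𝓝 0] (· ^ n)) :
    ∀ᶠ x in 𝓝[≠] 0, 0 < f x := by
  filter_upwards [nhdsWithin_le_nhds (h.bound (half_pos ha)), self_mem_nhdsWithin]
    with x hbound hx
  have hpow : 0 < x ^ n := hn.pow_pos hx
  rw [Real.norm_eq_abs, Real.norm_eq_abs, abs_of_pos hpow] at hbound
  nlinarith [(abs_le.1 hbound).1]

theorem mul_deriv_div_self {𝕜 : Type*} [NontriviallyNormedField 𝕜] {f : 𝕜 → 𝕜} {x : 𝕜}
    (hf : DifferentiableAt 𝕜 f x) (hx : x ≠ 0) :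
    x * deriv (fun y => f y / y) x = deriv f x - f x / x := by
  rw [(hf.hasDerivAt.fun_div (hasDerivAt_id' x) hx).deriv]
  field_simp

theorem sub_div_neg_of_margin_pos {x g g' G c : ℝ} (hx : x ≠ 0) (hG : 0 < G)
    (hyp : g ^ 2 - 2 * G * g' + c / 5 * g ^ 3 * G > 0)
    (hmargin : 0 < x * g * (2 * G - x * g) - c / 5 * x ^ 2 * g ^ 3 * G) :
    g' - g / x < 0 := by
  have hx2 : 0 < x ^ 2 := by positivity
  have hsum : 0 < 2 * G * (x * (g - x * g')) := by nlinarith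
  have hpos : 0 < x * (g - x * g') := pos_of_mul_pos_right hsum (by positivity)
  have : g' - g / x = -(x * (g - x * g')) / x ^ 2 := by field_simp; ring
  rw [this]
  exact div_neg_of_neg_of_pos (neg_neg_of_pos hpos) hx2

theorem prop22_increasing_general (g : ℝ → ℝ) (hg : AnalyticAt ℝ g 0)
    (h0 : g 0 = 0) (h1 : deriv g 0 = 1)
    (h2 : iteratedDeriv 2 g 0 = 0) (h3 : iteratedDeriv 3 g 0 < 0)
    (G : ℝ → ℝ) (hG : ∀ x, G x = ∫ t in (0:ℝ)..x, g t)
    (hyp : ∀ᶠ x in nhdsWithin 0 {(0:ℝ)}ᶜ,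
      g x ^ 2 - 2 * G x * deriv g x + (iteratedDeriv 4 g 0 / 5) * g x ^ 3 * G x > 0) :
    ∀ᶠ x in nhdsWithin 0 {(0:ℝ)}ᶜ, x * deriv (fun y => g y / y) x < 0 := by
  set A := iteratedDeriv 3 g 0 / 6
  have hA : A < 0 := div_neg_of_neg_of_pos h3 (by norm_num)
  have hgA := hg.isBigO_sub_cubic h0 h1 h2
  have hGA : (fun x => G x - (x ^ 2 / 2 + A * x ^ 4 / 4)) =O[𝓝 0] (· ^ 5) := by
    simpa only [hG] using isBigO_intervalIntegral_sub_quartic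
      (eventually_intervalIntegrable_of_continuousAt
        (hg.eventually_analyticAt.mono fun _ h => h.continuousAt)) hgA
  have hGpos : ∀ᶠ x in 𝓝[≠] 0, 0 < G x := by
    refine eventually_pos_of_isLittleO_sub_pow one_half_pos even_two ?_
    refine IsBigO.trans_isLittleO ?_ (isLittleO_pow_pow (m := 2) (n := 4) (by norm_num))
    exact ((hGA.trans (isBigO_pow_pow_of_le (by norm_num))).add
      (isBigO_const_mul_pow (A / 4) 4 le_rfl)).congr_left fun x => by ring
  have hmargin := eventually_pos_of_isLittleO_sub_pow (a := -A / 2) (by linarith) (by decide)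
    ((isBigO_margin_sub (iteratedDeriv 4 g 0) hgA hGA).trans_isLittleO
      (isLittleO_pow_pow (by norm_num)))
  filter_upwards [hyp, hGpos, hmargin, self_mem_nhdsWithin,
    nhdsWithin_le_nhds hg.eventually_analyticAt] with x hx hGx hmx hx0 hgx
  rw [mul_deriv_div_self hgx.differentiableAt hx0]
  exact sub_div_neg_of_margin_pos hx0 hGx hx hmx

theorem prop22_increasing (g : ℝ → ℝ) (hg : AnalyticAt ℝ g 0)
    (h0 : g 0 = 0) (h1 : deriv g 0 = 1)
    (h2 : iteratedDeriv 2 g 0 = 0) (h3 : iteratedDeriv 3 g 0 < 0)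
    (G : ℝ → ℝ) (hG : ∀ x, G x = ∫ t in (0:ℝ)..x, g t)
    (hsign : ∀ᶠ x in nhdsWithin 0 {(0:ℝ)}ᶜ, 0 < x * g x)
    (hyp : ∀ᶠ x in nhdsWithin 0 {(0:ℝ)}ᶜ,
      g x ^ 2 - 2 * G x * deriv g x + (iteratedDeriv 4 g 0 / 5) * g x ^ 3 * G x > 0) :
    ∀ᶠ x in nhdsWithin 0 {(0:ℝ)}ᶜ, x * deriv (fun y => g y / y) x < 0 :=
  prop22_increasing_general g hg h0 h1 h2 h3 G hG hyp
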